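/- Let a < b be reals and let U_n be an (n+1)-dimensional subspace of C^n([a,b],ℝ) possessing a non-negative Bernstein basis p_{n,0},…,p_{n,n}, and let f_0 ∈ U_n be strictly positive on [a,b] with D_{f_0}U_n := { (f/f_0)′ : f ∈ U_n } possessing a non-negative Bernstein basis q_{n-1,0},…,q_{n-1,n-1}. Let f_1 ∈ U_n be such that f_1/f_0 is strictly increasing on [a,b], write f_0 = Σ_{k=0}^n β_{n,k} p_{n,k} and f_1 = Σ_{k=0}^n γ_{n,k} p_{n,k}, and assume β_{n,k} > 0 for all k. Then there exist nodes t_{n,0} ≤ t_{n,1} ≤ ⋯ ≤ t_{n,n} in [a,b] and strictly positive weights α_{n,0},…,α_{n,n} such that the operator B_n f = Σ_{k=0}^n f(t_{n,k}) α_{n,k} p_{n,k} satisfies B_n f_0 = f_0 and B_n f_1 = f_1, if and only if the sequence k ↦ γ_{n,k}/β_{n,k} is non-decreasing. -/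
import Mathlib


open Set Filter Topology

noncomputable section

/-- `p k`, `k = 0, …, n`, is a Bernstein basis of the `(n+1)`-dimensional subspace `U` of
`C^n([a,b], ℝ)`: it is a basis of `U` and each `p k` has a zero of order `k` at `a`
(derivatives of order `< k` vanish at `a`, the `k`-th does not) and a zero of order
`n - k` at `b`. -/
def IsBernsteinBasisOf (a b : ℝ) (n : ℕ) (U : Submodule ℝ (ℝ → ℝ))
    (p : Fin (n + 1) → ℝ → ℝ) : Prop :=
  (∀ k, p k ∈ U) ∧ LinearIndependent ℝ p ∧ Submodule.span ℝ (Set.range p) = U ∧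
  ∀ k : Fin (n + 1),
    (∀ j : ℕ, j < (k : ℕ) → iteratedDeriv j (p k) a = 0) ∧
    iteratedDeriv (k : ℕ) (p k) a ≠ 0 ∧
    (∀ j : ℕ, j < n - (k : ℕ) → iteratedDeriv j (p k) b = 0) ∧
    iteratedDeriv (n - (k : ℕ)) (p k) b ≠ 0

/-- `q k`, `k = 0, …, n-1`, is a Bernstein basis of the `n`-dimensional space
`D_{f₀}U = { (f/f₀)' : f ∈ U }`: every `q k` lies in `D_{f₀}U`, every element of `D_{f₀}U`
lies in the span of the `q k`, the family is linearly independent, and each `q k` has a zero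
of order `k` at `a` and a zero of order `n - 1 - k` at `b`. -/
def IsBernsteinBasisOfD (a b : ℝ) (n : ℕ) (f₀ : ℝ → ℝ) (U : Submodule ℝ (ℝ → ℝ))
    (q : Fin n → ℝ → ℝ) : Prop :=
  (∀ k, ∃ f ∈ U, q k = deriv (fun x => f x / f₀ x)) ∧
  (∀ f ∈ U, deriv (fun x => f x / f₀ x) ∈ Submodule.span ℝ (Set.range q)) ∧
  LinearIndependent ℝ q ∧
  ∀ k : Fin n,
    (∀ j : ℕ, j < (k : ℕ) → iteratedDeriv j (q k) a = 0) ∧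
    iteratedDeriv (k : ℕ) (q k) a ≠ 0 ∧
    (∀ j : ℕ, j < n - 1 - (k : ℕ) → iteratedDeriv j (q k) b = 0) ∧
    iteratedDeriv (n - 1 - (k : ℕ)) (q k) b ≠ 0

/-- Theorem (a) ⟺ (b): a generalized Bernstein operator with non-decreasing nodes in `[a,b]`
and strictly positive weights fixing `f₀` and `f₁` exists iff `k ↦ γ k / β k` is
non-decreasing. -/
theorem exists_monotone_nodes_iff_ratio_monotone
    (n : ℕ) (a b : ℝ) (hab : a < b)
    (U : Submodule ℝ (ℝ → ℝ))
    (hUdim : Module.finrank ℝ ↥U = n + 1)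
    (hUsmooth : ∀ f ∈ U, ContDiff ℝ (n : ℕ∞) f)
    (p : Fin (n + 1) → ℝ → ℝ)
    (hp : IsBernsteinBasisOf a b n U p)
    (hpnn : ∀ k, ∀ x ∈ Set.Icc a b, 0 ≤ p k x)
    (f₀ f₁ : ℝ → ℝ) (hf₀U : f₀ ∈ U) (hf₁U : f₁ ∈ U)
    (hf₀pos : ∀ x ∈ Set.Icc a b, 0 < f₀ x)
    (q : Fin n → ℝ → ℝ)
    (hq : IsBernsteinBasisOfD a b n f₀ U q)
    (hqnn : ∀ k, ∀ x ∈ Set.Icc a b, 0 ≤ q k x)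
    (hmono : StrictMonoOn (fun x => f₁ x / f₀ x) (Set.Icc a b))
    (β γ : Fin (n + 1) → ℝ)
    (hβ : ∀ x, f₀ x = ∑ k, β k * p k x)
    (hγ : ∀ x, f₁ x = ∑ k, γ k * p k x)
    (hβpos : ∀ k, 0 < β k) :
    (∃ (t : Fin (n + 1) → ℝ) (α : Fin (n + 1) → ℝ),
        Monotone t ∧ (∀ k, t k ∈ Set.Icc a b) ∧ (∀ k, 0 < α k) ∧
        (∀ x, ∑ k, f₀ (t k) * α k * p k x = f₀ x) ∧
        (∀ x, ∑ k, f₁ (t k) * α k * p k x = f₁ x)) ↔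
      Monotone fun k => γ k / β k := by
  classical
  -- continuity of the ratio on [a,b]
  have hcont : ContinuousOn (fun x => f₁ x / f₀ x) (Set.Icc a b) :=
    ((hUsmooth f₁ hf₁U).continuous.continuousOn).div
      ((hUsmooth f₀ hf₀U).continuous.continuousOn) (fun x hx => (hf₀pos x hx).ne')
  have haI : a ∈ Set.Icc a b := ⟨le_refl a, hab.le⟩
  have hbI : b ∈ Set.Icc a b := ⟨hab.le, le_refl b⟩
  -- endpoint values of the basis
  have hpa : ∀ k : Fin (n + 1), k ≠ 0 → p k a = 0 := by
    intro k hk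
    have h := (hp.2.2.2 k).1 0 (Nat.pos_of_ne_zero (fun h => hk (Fin.ext h)))
    simpa [iteratedDeriv_zero] using h
  have hpa0 : p 0 a ≠ 0 := by
    have h := (hp.2.2.2 0).2.1
    simpa [iteratedDeriv_zero] using h
  have hpb : ∀ k : Fin (n + 1), k ≠ Fin.last n → p k b = 0 := by
    intro k hk
    have hklt : (k : ℕ) < n := by
      rcases lt_or_eq_of_le (Nat.lt_succ_iff.mp k.isLt) with h | h
      · exact h
      · exact absurd (Fin.ext h) hk
    have h := (hp.2.2.2 k).2.2.1 0 (Nat.sub_pos_of_lt hklt)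
    simpa [iteratedDeriv_zero] using h
  have hpbn : p (Fin.last n) b ≠ 0 := by
    have h := (hp.2.2.2 (Fin.last n)).2.2.2
    simpa [iteratedDeriv_zero] using h
  -- values of f₀, f₁ at endpoints
  have hsuma : ∀ c : Fin (n + 1) → ℝ, ∑ k, c k * p k a = c 0 * p 0 a := by
    intro c
    refine Finset.sum_eq_single 0 (fun i _ hi => ?_) (fun h => absurd (Finset.mem_univ 0) h)
    rw [hpa i hi, mul_zero]
  have hsumb : ∀ c : Fin (n + 1) → ℝ,
      ∑ k, c k * p k b = c (Fin.last n) * p (Fin.last n) b := by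
    intro c
    refine Finset.sum_eq_single (Fin.last n) (fun i _ hi => ?_)
      (fun h => absurd (Finset.mem_univ _) h)
    rw [hpb i hi, mul_zero]
  have hra : f₁ a / f₀ a = γ 0 / β 0 := by
    rw [hβ a, hγ a, hsuma β, hsuma γ, mul_div_mul_right _ _ hpa0]
  have hrb : f₁ b / f₀ b = γ (Fin.last n) / β (Fin.last n) := by
    rw [hβ b, hγ b, hsumb β, hsumb γ, mul_div_mul_right _ _ hpbn]
  constructor
  · rintro ⟨t, α, hmt, htmem, hαpos, h0, h1⟩
    -- coefficients are determined by linear independence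
    have hcoef : ∀ c d : Fin (n + 1) → ℝ,
        (∀ x, ∑ k, c k * p k x = ∑ k, d k * p k x) → ∀ k, c k = d k := by
      intro c d h k
      have h2 : ∑ i, (c i - d i) • p i = 0 := by
        funext x
        have := h x
        simp only [Finset.sum_apply, Pi.smul_apply, smul_eq_mul, Pi.zero_apply, sub_mul,
          Finset.sum_sub_distrib]
        rw [this, sub_self]
      have := (Fintype.linearIndependent_iff.mp hp.2.1) (fun i => c i - d i) h2 k
      linarith
    have c0 : ∀ k, f₀ (t k) * α k = β k :=
      hcoef _ _ (fun x => by rw [h0 x, hβ x])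
    have c1 : ∀ k, f₁ (t k) * α k = γ k :=
      hcoef _ _ (fun x => by rw [h1 x, hγ x])
    have hratio : ∀ k, γ k / β k = f₁ (t k) / f₀ (t k) := by
      intro k
      rw [← c0 k, ← c1 k, mul_div_mul_right _ _ (hαpos k).ne']
    intro j k hjk
    simp only
    rw [hratio j, hratio k]
    exact hmono.monotoneOn (htmem j) (htmem k) (hmt hjk)
  · intro hr
    have hmem : ∀ k : Fin (n + 1),
        γ k / β k ∈ Set.Icc (f₁ a / f₀ a) (f₁ b / f₀ b) := by
      intro k
      rw [hra, hrb]
      exact ⟨hr (Fin.zero_le k), hr (Fin.le_last k)⟩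
    have himg : ∀ k : Fin (n + 1), ∃ x ∈ Set.Icc a b,
        f₁ x / f₀ x = γ k / β k := by
      intro k
      obtain ⟨x, hx, hxe⟩ := intermediate_value_Icc hab.le hcont (hmem k)
      exact ⟨x, hx, hxe⟩
    choose t ht hgt using himg
    refine ⟨t, fun k => β k / f₀ (t k), ?_, ht, ?_, ?_, ?_⟩
    · intro j k hjk
      by_contra h
      push_neg at h
      have hlt : f₁ (t k) / f₀ (t k) < f₁ (t j) / f₀ (t j) := hmono (ht k) (ht j) h
      rw [hgt j, hgt k] at hlt
      exact absurd (hr hjk) (not_le.mpr hlt)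
    · intro k
      exact div_pos (hβpos k) (hf₀pos _ (ht k))
    · intro x
      rw [hβ x]
      refine Finset.sum_congr rfl (fun k _ => ?_)
      rw [mul_div_cancel₀ _ (hf₀pos _ (ht k)).ne']
    · intro x
      rw [hγ x]
      refine Finset.sum_congr rfl (fun k _ => ?_)
      have hf0 := (hf₀pos _ (ht k)).ne'
      have h1 : f₁ (t k) * (β k / f₀ (t k)) = γ k := by
        rw [mul_div_assoc', div_eq_iff hf0]
        have := hgt k
        rw [div_eq_div_iff hf0 (hβpos k).ne'] at this
        linarith
      rw [h1]
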